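/- Let f: ℕ → ℂ satisfy Σ_{n ≤ X} |f(n)|² ≪ X(log X)^{c-1} for some c ≥ 1 and all X ≥ 2. Then for any Y with 2 ≤ Y ≤ X, Σ_{n ≤ X} |f(n)|·log(1 + Y/n) ≪ X(log X)^{(c-1)/2}·(Y/X + (log X)·min(1, Y/X))^{1/2} — in particular, if Y = X(log X)^{-A}, then Σ_{n ≤ X} |f(n)|·log(1 + Y/n) ≪ X(log X)^{(c+1)/2 - A/2} + X(log X)^{(c-1)/2 - A}. -/

import Mathlib

open Finset Real

/-! Cauchy–Schwarz with the weights `log (1 + Y / n)` bounds the sum by the square root of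
`∑ ‖f n‖² · ∑ log (1 + Y / n)²`. The first factor is the hypothesis; for the second,
`log (1 + t) ≤ 2 √t` turns it into `4 Y` times a harmonic sum, which is at most `4 Y (1 + log X)`. -/

lemma Real.log_one_add_le_two_mul_sqrt {t : ℝ} (ht : 0 ≤ t) : log (1 + t) ≤ 2 * √t := by
  have hsq : 1 + t ≤ (1 + √t) ^ 2 := by nlinarith [sq_sqrt ht, sqrt_nonneg t]
  calc log (1 + t) ≤ log ((1 + √t) ^ 2) := log_le_log (by linarith) hsq
    _ = 2 * log (1 + √t) := by rw [log_pow, Nat.cast_ofNat]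
    _ ≤ 2 * √t := by linarith [log_le_sub_one_of_pos (by positivity : 0 < 1 + √t)]

lemma Real.log_one_add_sq_le {t : ℝ} (ht : 0 ≤ t) : log (1 + t) ^ 2 ≤ 4 * t := by
  calc log (1 + t) ^ 2 ≤ (2 * √t) ^ 2 :=
        pow_le_pow_left₀ (log_nonneg (by linarith)) (log_one_add_le_two_mul_sqrt ht) 2
    _ = 4 * t := by rw [mul_pow, sq_sqrt ht]; norm_num

lemma sum_Icc_inv_le_one_add_log (N : ℕ) : ∑ n ∈ Icc 1 N, (n : ℝ)⁻¹ ≤ 1 + log N := by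
  simpa [harmonic_eq_sum_Icc] using harmonic_le_one_add_log N

lemma sum_Icc_log_one_add_div_sq_le {Y : ℝ} (hY : 0 ≤ Y) (N : ℕ) :
    ∑ n ∈ Icc 1 N, log (1 + Y / n) ^ 2 ≤ 4 * Y * (1 + log N) := by
  calc ∑ n ∈ Icc 1 N, log (1 + Y / n) ^ 2 ≤ ∑ n ∈ Icc 1 N, 4 * Y * (n : ℝ)⁻¹ :=
        sum_le_sum fun n _ ↦ (log_one_add_sq_le (by positivity)).trans_eq (by ring)
    _ = 4 * Y * ∑ n ∈ Icc 1 N, (n : ℝ)⁻¹ := (mul_sum ..).symm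
    _ ≤ 4 * Y * (1 + log N) := by gcongr; exact sum_Icc_inv_le_one_add_log N

lemma sum_mul_log_one_add_div_le (a : ℕ → ℝ) {Y : ℝ} (hY : 0 ≤ Y) (N : ℕ) :
    ∑ n ∈ Icc 1 N, a n * log (1 + Y / n)
      ≤ √(∑ n ∈ Icc 1 N, a n ^ 2) * (2 * √(Y * (1 + log N))) := by
  refine (sum_mul_le_sqrt_mul_sqrt _ _ _).trans ?_
  gcongr
  calc √(∑ n ∈ Icc 1 N, log (1 + Y / n) ^ 2) ≤ √(4 * (Y * (1 + log N))) :=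
        sqrt_le_sqrt ((sum_Icc_log_one_add_div_sq_le hY N).trans_eq (mul_assoc ..))
    _ = 2 * √(Y * (1 + log N)) := by
        rw [sqrt_mul zero_le_four, show (4 : ℝ) = 2 ^ 2 by norm_num, sqrt_sq zero_le_two]

lemma sum_norm_mul_log_one_add_div_le (f : ℕ → ℂ) (c C₀ : ℝ)
    (hmoment : ∀ X : ℝ, 2 ≤ X →
      ∑ n ∈ Icc 1 ⌊X⌋₊, ‖f n‖ ^ 2 ≤ C₀ * X * log X ^ (c - 1))
    {X Y : ℝ} (hX : 2 ≤ X) (hY : 0 ≤ Y) :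
    ∑ n ∈ Icc 1 ⌊X⌋₊, ‖f n‖ * log (1 + Y / n)
      ≤ 2 * √|C₀| * X * log X ^ ((c - 1) / 2) * √(Y / X * (1 + log X)) := by
  have hX₀ : 0 < X := by linarith
  have hlogX : 0 < log X := log_pos (by linarith)
  have hlog_floor : log ⌊X⌋₊ ≤ log X := by
    rcases Nat.eq_zero_or_pos ⌊X⌋₊ with h | h
    · rw [h, Nat.cast_zero, log_zero]; exact hlogX.le
    · exact log_le_log (by exact_mod_cast h) (Nat.floor_le hX₀.le)
  have hmoment' : ∑ n ∈ Icc 1 ⌊X⌋₊, ‖f n‖ ^ 2 ≤ |C₀| * X * log X ^ (c - 1) :=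
    (hmoment X hX).trans (by gcongr; exact le_abs_self C₀)
  calc ∑ n ∈ Icc 1 ⌊X⌋₊, ‖f n‖ * log (1 + Y / n)
      ≤ √(∑ n ∈ Icc 1 ⌊X⌋₊, ‖f n‖ ^ 2) * (2 * √(Y * (1 + log ⌊X⌋₊))) :=
        sum_mul_log_one_add_div_le _ hY _
    _ ≤ √(|C₀| * X * log X ^ (c - 1)) * (2 * √(Y * (1 + log X))) := by gcongr
    _ = 2 * √|C₀| * X * log X ^ ((c - 1) / 2) * √(Y / X * (1 + log X)) := by
        have hX_sqrt : X = √X * √X := (mul_self_sqrt hX₀.le).symm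
        rw [sqrt_mul (by positivity), sqrt_mul (abs_nonneg _), sqrt_eq_rpow (log X ^ _),
          ← rpow_mul hlogX.le, mul_one_div, div_mul_eq_mul_div, sqrt_div' _ hX₀.le]
        nth_rw 4 [hX_sqrt]
        field_simp

lemma sqrt_rpow_neg_mul_one_add_log_le {X : ℝ} (hX : 2 ≤ X) (A : ℝ) :
    √(log X ^ (-A) * (1 + log X)) ≤ √5 * log X ^ (1 - A / 2) := by
  have hlogX : 0 < log X := log_pos (by linarith)
  have hlog2 : log 2 ≤ log X := log_le_log two_pos hX
  have hsq : (log X ^ (1 - A / 2)) ^ 2 = log X ^ (-A) * log X ^ 2 := by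
    rw [← rpow_natCast, ← rpow_mul hlogX.le, ← rpow_natCast, ← rpow_add hlogX]
    norm_num; ring_nf
  have h5 : 1 + log X ≤ 5 * log X ^ 2 := by nlinarith [log_two_gt_d9]
  rw [sqrt_le_left, mul_pow, sq_sqrt (by norm_num), hsq]
  · nlinarith [rpow_pos_of_pos hlogX (-A)]
  · positivity

theorem weighted_log_sum_bound_general (f : ℕ → ℂ) (c : ℝ) (C₀ : ℝ)
    (hmoment : ∀ X : ℝ, 2 ≤ X →
      ∑ n ∈ Finset.Icc 1 ⌊X⌋₊, ‖f n‖ ^ 2 ≤ C₀ * X * (Real.log X) ^ (c - 1)) :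
    (∃ C : ℝ, ∀ X Y : ℝ, 2 ≤ X → 2 ≤ Y → Y ≤ X →
        ∑ n ∈ Finset.Icc 1 ⌊X⌋₊, ‖f n‖ * Real.log (1 + Y / n)
          ≤ C * X * (Real.log X) ^ ((c - 1) / 2)
              * (Y / X + Real.log X * min 1 (Y / X)) ^ ((1 : ℝ) / 2))
      ∧ (∀ A : ℝ, 0 < A → ∃ C : ℝ, ∀ X : ℝ, 2 ≤ X →
          2 ≤ X * (Real.log X) ^ (-A) →
          ∑ n ∈ Finset.Icc 1 ⌊X⌋₊,
              ‖f n‖ * Real.log (1 + X * (Real.log X) ^ (-A) / n)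
            ≤ C * (X * (Real.log X) ^ ((c + 1) / 2 - A / 2)
                + X * (Real.log X) ^ ((c - 1) / 2 - A))) := by
  refine ⟨⟨2 * √|C₀|, fun X Y hX hY hYX ↦ ?_⟩, fun A _ ↦ ⟨2 * √|C₀| * √5, fun X hX _ ↦ ?_⟩⟩
  · have hX₀ : 0 < X := by linarith
    rw [min_eq_right ((div_le_one hX₀).mpr hYX), ← sqrt_eq_rpow,
      show Y / X + log X * (Y / X) = Y / X * (1 + log X) by ring]
    exact sum_norm_mul_log_one_add_div_le f c C₀ hmoment hX (by linarith)
  · have hX₀ : 0 < X := by linarith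
    have hlogX : 0 < log X := log_pos (by linarith)
    calc _ ≤ 2 * √|C₀| * X * log X ^ ((c - 1) / 2) * √(log X ^ (-A) * (1 + log X)) := by
          simpa [hX₀.ne'] using
            sum_norm_mul_log_one_add_div_le f c C₀ hmoment hX (Y := X * log X ^ (-A))
              (by positivity)
      _ ≤ 2 * √|C₀| * X * log X ^ ((c - 1) / 2) * (√5 * log X ^ (1 - A / 2)) := by
          gcongr; exact sqrt_rpow_neg_mul_one_add_log_le hX A
      _ = 2 * √|C₀| * √5 * (X * log X ^ ((c + 1) / 2 - A / 2)) := by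
          rw [show (c + 1) / 2 - A / 2 = (c - 1) / 2 + (1 - A / 2) by ring, rpow_add hlogX]
          ring
      _ ≤ _ := by gcongr; exact le_add_of_nonneg_right (by positivity)

/-- If `∑_{n ≤ X} |f(n)|² ≪ X (log X)^{c-1}`, then for `2 ≤ Y ≤ X`,
`∑_{n ≤ X} |f(n)| log(1 + Y/n) ≪ X (log X)^{(c-1)/2} (Y/X + log X · min(1, Y/X))^{1/2}`;
in particular for `Y = X (log X)^{-A}` the sum is
`≪ X (log X)^{(c+1)/2 - A/2} + X (log X)^{(c-1)/2 - A}`. -/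
theorem weighted_log_sum_bound (f : ℕ → ℂ) (c : ℝ) (hc : 1 ≤ c) (C₀ : ℝ)
    (hmoment : ∀ X : ℝ, 2 ≤ X →
      ∑ n ∈ Finset.Icc 1 ⌊X⌋₊, ‖f n‖ ^ 2 ≤ C₀ * X * (Real.log X) ^ (c - 1)) :
    (∃ C : ℝ, ∀ X Y : ℝ, 2 ≤ X → 2 ≤ Y → Y ≤ X →
        ∑ n ∈ Finset.Icc 1 ⌊X⌋₊, ‖f n‖ * Real.log (1 + Y / n)
          ≤ C * X * (Real.log X) ^ ((c - 1) / 2)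
              * (Y / X + Real.log X * min 1 (Y / X)) ^ ((1 : ℝ) / 2))
      ∧ (∀ A : ℝ, 0 < A → ∃ C : ℝ, ∀ X : ℝ, 2 ≤ X →
          2 ≤ X * (Real.log X) ^ (-A) →
          ∑ n ∈ Finset.Icc 1 ⌊X⌋₊,
              ‖f n‖ * Real.log (1 + X * (Real.log X) ^ (-A) / n)
            ≤ C * (X * (Real.log X) ^ ((c + 1) / 2 - A / 2)
                + X * (Real.log X) ^ ((c - 1) / 2 - A))) :=
  weighted_log_sum_bound_general f c C₀ hmoment
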